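/- arXiv:2406.14285 — 2 statements merged into one kernel-verified Lean document; each statement's English description precedes it below -/
import Mathlib

section
/- Let d ≥ 2. The second frame potential of the Haar measure equals 2: ∫_{U(d)} |tr U|⁴ dμ(U) = 2. -/
open MeasureTheory Matrix
open scoped Matrix

noncomputable instance (d : ℕ) : MeasurableSpace (Matrix.unitaryGroup (Fin d) ℂ) := borel _
instance (d : ℕ) : BorelSpace (Matrix.unitaryGroup (Fin d) ℂ) := ⟨rfl⟩

/-!
Expand `|tr U|⁴ = ∑ U_ii U_jj conj (U_kk U_ll)`. Multiplying a row of `U` by `i` preserves the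
Haar measure, so every term with `{k, l} ≠ {i, j}` integrates to zero, and permutation invariance
reduces the rest to `d A + 2 d (d - 1) C` with `A = E|U_aa|⁴` and `C = E|U_aa|²|U_bb|²`.
Averaging over a Householder reflection mixing rows `a` and `b`, twisted by the phases `iᵏ` on
row `b`, gives `A = 2 B` with `B = E|U_aa|²|U_ba|²`, and since the rows of `U` are unit vectors,
`B + (d - 1) C = E|U_aa|² = 1 / d`. Hence the integral is `2 d (B + (d - 1) C) = 2`.
-/

open scoped ComplexConjugate

lemma Continuous.integrable_of_compactSpace {X E : Type*} [TopologicalSpace X] [MeasurableSpace X]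
    [OpensMeasurableSpace X] [CompactSpace X] [NormedAddCommGroup E] {μ : Measure X}
    [IsFiniteMeasure μ] {f : X → E} (hf : Continuous f) : Integrable f μ :=
  hf.integrable_of_hasCompactSupport (HasCompactSupport.of_compactSpace f)

lemma integral_eq_zero_of_mul_left_eq_mul {G : Type*} [Group G] [MeasurableSpace G]
    [MeasurableMul G] {μ : Measure G} [μ.IsMulLeftInvariant] {f : G → ℂ} (g : G) {c : ℂ}
    (hc : c ≠ 1) (hf : ∀ x, f (g * x) = c * f x) : ∫ x, f x ∂μ = 0 := by
  have h : ∫ x, f x ∂μ = c * ∫ x, f x ∂μ := by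
    rw [← integral_const_mul, ← integral_mul_left_eq_self f g]
    simp only [hf]
  have : (1 - c) * ∫ x, f x ∂μ = 0 := by linear_combination h
  exact (mul_eq_zero.mp this).resolve_left (sub_ne_zero.mpr hc.symm)

lemma Complex.I_pow_mul_conj_I_pow_eq_one_iff {a b : ℕ} (ha : a ≤ 2) (hb : b ≤ 2) :
    I ^ a * conj (I ^ b) = 1 ↔ a = b := by
  rw [map_pow, conj_I, show -I = I ^ 3 by simp [pow_succ], ← pow_mul, ← pow_add,
    isPrimitiveRoot_I.pow_eq_one_iff_dvd]
  omega

lemma Complex.sum_norm_add_I_pow_mul_pow_four (u w : ℂ) :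
    ∑ k ∈ Finset.range 4, ‖u + I ^ k * w‖ ^ 4 =
      4 * ((‖u‖ ^ 2 + ‖w‖ ^ 2) ^ 2 + 2 * ‖u‖ ^ 2 * ‖w‖ ^ 2) := by
  have h4 : ∀ z : ℂ, ‖z‖ ^ 4 = normSq z ^ 2 := fun z => by rw [← Complex.sq_norm]; ring
  simp only [Finset.sum_range_succ, Finset.sum_range_zero, h4, Complex.sq_norm]
  simp only [pow_zero, one_mul, normSq_apply, add_re, add_im, pow_succ, mul_re, mul_im, I_re, I_im,
    I_mul_I, zero_mul, zero_add, zero_sub, neg_mul, neg_re, neg_im, neg_neg]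
  ring

lemma Pi.mulSingle_mul_mulSingle {ι M : Type*} [DecidableEq ι] [CommMonoid M] (p : ι) (x : M)
    (i j : ι) :
    (Pi.mulSingle p x : ι → M) i * (Pi.mulSingle p x : ι → M) j =
      x ^ ({i, j} : Multiset ι).count p := by
  rw [Multiset.insert_eq_cons, Multiset.count_cons, Multiset.count_singleton]
  simp only [@eq_comm _ p, Pi.mulSingle_apply]
  split_ifs <;> simp [pow_succ]

lemma Multiset.pair_eq_pair_iff {α : Type*} {a b c d : α} :
    ({a, b} : Multiset α) = {c, d} ↔ a = c ∧ b = d ∨ a = d ∧ b = c := by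
  simp only [insert_eq_cons, cons_eq_cons, singleton_inj, ne_eq, singleton_eq_cons_iff,
    exists_eq_right_right, and_true]
  grind

lemma Fintype.sum_eq_add_card_sub_one_mul {ι R : Type*} [Fintype ι] [DecidableEq ι] [CommRing R]
    {f : ι → R} {c : R} (a : ι) (hf : ∀ i ≠ a, f i = c) :
    ∑ i, f i = f a + (card ι - 1) * c := by
  rw [← Finset.add_sum_erase _ _ (Finset.mem_univ a),
    Finset.sum_congr rfl fun i hi => hf i (Finset.ne_of_mem_erase hi), Finset.sum_const,
    Finset.card_erase_of_mem (Finset.mem_univ a), Finset.card_univ, nsmul_eq_mul,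
    Nat.cast_sub (card_pos_iff.mpr ⟨a⟩), Nat.cast_one]

namespace Matrix

variable {n 𝕜 : Type*} [Fintype n] [DecidableEq n] [RCLike 𝕜]

lemma diagonal_mem_unitaryGroup {d : n → 𝕜} (hd : ∀ i, ‖d i‖ = 1) :
    diagonal d ∈ unitaryGroup n 𝕜 := by
  rw [mem_unitaryGroup_iff, star_eq_conjTranspose, diagonal_conjTranspose, diagonal_mul_diagonal,
    ← diagonal_one]
  congr 1
  ext i
  simp [RCLike.mul_conj, hd]

lemma permMatrix_mem_unitaryGroup (σ : Equiv.Perm n) : σ.permMatrix 𝕜 ∈ unitaryGroup n 𝕜 := by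
  rw [mem_unitaryGroup_iff, star_eq_conjTranspose, conjTranspose_permMatrix, ← permMatrix_mul,
    inv_mul_cancel, permMatrix_one]

def householder (v : n → 𝕜) : Matrix n n 𝕜 := 1 - (2 : 𝕜) • vecMulVec v (star v)

lemma householder_mem_unitaryGroup {v : n → 𝕜} (hv : star v ⬝ᵥ v = 1) :
    householder v ∈ unitaryGroup n 𝕜 := by
  rw [householder, mem_unitaryGroup_iff, star_eq_conjTranspose, conjTranspose_sub,
    conjTranspose_one, conjTranspose_smul, conjTranspose_vecMulVec, star_star, star_ofNat]
  simp only [sub_mul, mul_sub, one_mul, mul_one, smul_mul_smul_comm, vecMulVec_mul_vecMulVec, hv,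
    one_smul]
  module

lemma householder_mul_apply (v : n → 𝕜) (M : Matrix n n 𝕜) (i j : n) :
    (householder v * M) i j = M i j - 2 * v i * ∑ k, star (v k) * M k j := by
  simp [householder, sub_mul, vecMulVec_mul, vecMulVec_apply, vecMul, dotProduct, mul_assoc]

end Matrix

namespace Matrix.UnitaryGroup

section Algebra

variable {n 𝕜 : Type*} [Fintype n] [DecidableEq n] [RCLike 𝕜]

instance : CompactSpace (unitaryGroup n 𝕜) :=
  isCompact_iff_compactSpace.mp <|
    (isCompact_univ_pi fun _ => isCompact_univ_pi fun _ => isCompact_closedBall (0 : 𝕜) 1)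
      |>.of_isClosed_subset (isClosed_unitary (R := Matrix n n 𝕜)) fun _ hU i _ j _ =>
        mem_closedBall_zero_iff.2 (entry_norm_bound_of_unitary hU i j)

@[fun_prop]
lemma continuous_coe_apply (i j : n) : Continuous fun U : unitaryGroup n 𝕜 => U i j :=
  continuous_subtype_val.matrix_elem i j

lemma sum_norm_sq_apply (U : unitaryGroup n 𝕜) (i : n) : ∑ j, ‖U i j‖ ^ 2 = 1 := by
  have h := congr_fun (congr_fun (mem_unitaryGroup_iff.mp U.2) i) i
  simp only [Matrix.mul_apply, star_apply, one_apply_eq, RCLike.star_def, RCLike.mul_conj] at h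
  exact_mod_cast h

def perm (σ : Equiv.Perm n) : unitaryGroup n 𝕜 := ⟨σ.permMatrix 𝕜, permMatrix_mem_unitaryGroup σ⟩

lemma perm_mul_mul_perm_inv (σ τ : Equiv.Perm n) (U : unitaryGroup n 𝕜) :
    ((perm σ * U * perm τ⁻¹ : unitaryGroup n 𝕜) : Matrix n n 𝕜) =
      (U : Matrix n n 𝕜).submatrix σ τ := by
  simp only [perm, Submonoid.coe_mul, PEquiv.toMatrix_toPEquiv_mul, PEquiv.mul_toMatrix_toPEquiv,
    submatrix_submatrix]
  rfl

def phase (p : n) (k : ℕ) : unitaryGroup n ℂ :=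
  ⟨diagonal (Pi.mulSingle p (Complex.I ^ k)), diagonal_mem_unitaryGroup fun i => by
    by_cases i = p <;> simp [*]⟩

lemma phase_mul_apply (p : n) (k : ℕ) (U : unitaryGroup n ℂ) (i j : n) :
    (phase p k * U) i j = (Pi.mulSingle p (Complex.I ^ k) : n → ℂ) i * U i j :=
  diagonal_mul _ _ _ _

end Algebra

section Haar

variable {n : Type*} [Fintype n] [DecidableEq n]
  [MeasurableSpace (unitaryGroup n ℂ)] [BorelSpace (unitaryGroup n ℂ)]
  (μ : Measure (unitaryGroup n ℂ))

lemma integral_submatrix [μ.IsMulLeftInvariant] [μ.IsMulRightInvariant] {E : Type*}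
    [NormedAddCommGroup E] [NormedSpace ℝ E] (F : Matrix n n ℂ → E) (σ τ : Equiv.Perm n) :
    ∫ U, F ((U : Matrix n n ℂ).submatrix σ τ) ∂μ = ∫ U, F U ∂μ := by
  simp_rw [← perm_mul_mul_perm_inv, mul_assoc]
  exact (integral_mul_right_eq_self (μ := μ) (fun V => F (perm σ * V).1) _).trans
    (integral_mul_left_eq_self (fun V : unitaryGroup n ℂ => F V) _)

lemma integral_mul_mul_conj_eq_zero [μ.IsMulLeftInvariant] {i₁ i₂ i₃ i₄ : n} (j₁ j₂ j₃ j₄ : n)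
    (h : ({i₁, i₂} : Multiset n) ≠ {i₃, i₄}) :
    ∫ U, U i₁ j₁ * U i₂ j₂ * conj (U i₃ j₃ * U i₄ j₄) ∂μ = 0 := by
  obtain ⟨p, hp⟩ : ∃ p, ({i₁, i₂} : Multiset n).count p ≠ ({i₃, i₄} : Multiset n).count p := by
    by_contra! h'
    exact h (Multiset.ext.mpr h')
  have hcount : ∀ x y : n, ({x, y} : Multiset n).count p ≤ 2 := fun x y =>
    (Multiset.count_le_card _ _).trans_eq rfl
  refine integral_eq_zero_of_mul_left_eq_mul (phase p 1)
    ((Complex.I_pow_mul_conj_I_pow_eq_one_iff (hcount _ _) (hcount _ _)).not.mpr hp) fun U => ?_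
  simp only [phase_mul_apply, pow_one]
  rw [← Pi.mulSingle_mul_mulSingle, ← Pi.mulSingle_mul_mulSingle]
  simp only [map_mul]
  ring

lemma sum_integral_diag_mul_conj [μ.IsMulLeftInvariant] (p : n × n) :
    ∑ q : n × n, ∫ U, U p.1 p.1 * U p.2 p.2 * conj (U q.1 q.1 * U q.2 q.2) ∂μ =
      (if p.1 = p.2 then 1 else 2) * ∫ U, ‖U p.1 p.1‖ ^ 2 * ‖U p.2 p.2‖ ^ 2 ∂μ := by
  have hzero : ∀ q ∉ ({p, p.swap} : Finset (n × n)),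
      ∫ U, U p.1 p.1 * U p.2 p.2 * conj (U q.1 q.1 * U q.2 q.2) ∂μ = 0 := by
    intro q hq
    refine integral_mul_mul_conj_eq_zero μ _ _ _ _ fun h => hq ?_
    rcases Multiset.pair_eq_pair_iff.mp h with ⟨h₁, h₂⟩ | ⟨h₁, h₂⟩ <;>
      simp [Prod.ext_iff, h₁, h₂]
  have hsq : ∀ q ∈ ({p, p.swap} : Finset (n × n)),
      ∫ U, U p.1 p.1 * U p.2 p.2 * conj (U q.1 q.1 * U q.2 q.2) ∂μ =
        ∫ U, ‖U p.1 p.1‖ ^ 2 * ‖U p.2 p.2‖ ^ 2 ∂μ := by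
    intro q hq
    rw [← integral_complex_ofReal]
    congr with U
    obtain rfl | rfl : q = p ∨ q = p.swap := by simpa using hq
    all_goals
      simp only [Prod.fst_swap, Prod.snd_swap, map_mul, Complex.ofReal_mul, Complex.ofReal_pow,
        ← Complex.mul_conj']
      ring
  rw [← Finset.sum_subset (Finset.subset_univ _) fun q _ => hzero q, Finset.sum_congr rfl hsq]
  split_ifs with h
  · simp [Prod.ext_iff, h]
  · rw [Finset.sum_pair (by simp [Prod.ext_iff, h]), two_mul]

noncomputable def entryMoment (i j k l : n) : ℝ := ∫ U, ‖U i j‖ ^ 2 * ‖U k l‖ ^ 2 ∂μ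

lemma integral_norm_trace_pow_four [IsFiniteMeasure μ] [μ.IsMulLeftInvariant] :
    ∫ U, ‖trace (U : Matrix n n ℂ)‖ ^ 4 ∂μ =
      ∑ p : n × n, (if p.1 = p.2 then 1 else 2) * entryMoment μ p.1 p.1 p.2 p.2 := by
  have hexpand : ∀ U : unitaryGroup n ℂ, ((‖trace (U : Matrix n n ℂ)‖ ^ 4 : ℝ) : ℂ) =
      ∑ p : n × n, ∑ q : n × n, U p.1 p.1 * U p.2 p.2 * conj (U q.1 q.1 * U q.2 q.2) := by
    intro U
    have hsq : trace (U : Matrix n n ℂ) ^ 2 = ∑ p : n × n, U p.1 p.1 * U p.2 p.2 := by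
      rw [sq, trace, Finset.sum_mul_sum, ← Finset.sum_product']
      rfl
    rw [← Finset.sum_mul_sum, ← map_sum, ← hsq, Complex.mul_conj', norm_pow]
    push_cast
    ring
  apply Complex.ofReal_injective
  push_cast
  rw [← integral_complex_ofReal]
  simp_rw [hexpand]
  rw [integral_finsetSum _ fun p _ => Continuous.integrable_of_compactSpace (by fun_prop)]
  refine Finset.sum_congr rfl fun p _ => ?_
  rw [integral_finsetSum _ fun q _ => Continuous.integrable_of_compactSpace (by fun_prop),
    sum_integral_diag_mul_conj]
  split_ifs <;> simp [entryMoment]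

section Invariant

variable [μ.IsMulLeftInvariant] [μ.IsMulRightInvariant]

lemma entryMoment_perm (σ τ : Equiv.Perm n) (i j k l : n) :
    entryMoment μ (σ i) (τ j) (σ k) (τ l) = entryMoment μ i j k l :=
  integral_submatrix μ (fun M => ‖M i j‖ ^ 2 * ‖M k l‖ ^ 2) σ τ

lemma entryMoment_diag (a i : n) : entryMoment μ i i i i = entryMoment μ a a a a := by
  simpa using entryMoment_perm μ (Equiv.swap a i) (Equiv.swap a i) a a a a

lemma entryMoment_diag_of_ne {a b i j : n} (hab : a ≠ b) (hij : i ≠ j) :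
    entryMoment μ i i j j = entryMoment μ a a b b := by
  set σ := Equiv.swap (Equiv.swap a i b) j * Equiv.swap a i
  have hσa : σ a = i := by
    have : i ≠ Equiv.swap a i b := by simpa using (Equiv.swap a i).injective.ne hab
    simp [σ, Equiv.swap_apply_of_ne_of_ne this hij]
  have hσb : σ b = j := by simp [σ]
  simpa [hσa, hσb] using entryMoment_perm μ σ σ a a b b

lemma entryMoment_eq_two_mul [IsFiniteMeasure μ] {a b : n} (hab : a ≠ b) :
    entryMoment μ a a a a = 2 * entryMoment μ a a b a := by
  set v : n → ℂ := Pi.single a (3 / 5) + Pi.single b (4 / 5)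
  have hv : star v ⬝ᵥ v = 1 := by
    norm_num [v, dotProduct_add, hab, hab.symm]
  set H : unitaryGroup n ℂ := ⟨householder v, householder_mem_unitaryGroup hv⟩
  have hH : ∀ (k : ℕ) (U : unitaryGroup n ℂ),
      (H * (phase b k * U)) a a = 7 / 25 * U a a + Complex.I ^ k * (-24 / 25 * U b a) := by
    intro k U
    rw [mul_apply, householder_mul_apply,
      Fintype.sum_eq_add a b hab (by intro l hl; simp [v, hl.1, hl.2])]
    simp only [v, phase_mul_apply, Pi.add_apply, Pi.single_eq_same, Pi.single_eq_of_ne hab,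
      Pi.single_eq_of_ne hab.symm, Pi.mulSingle_eq_same, Pi.mulSingle_eq_of_ne hab,
      star_div₀, star_ofNat, add_zero, zero_add, one_mul]
    ring
  have hinv : ∀ k, ∫ U, ‖7 / 25 * U a a + Complex.I ^ k * (-24 / 25 * U b a)‖ ^ 4 ∂μ =
      ∫ U, ‖U a a‖ ^ 4 ∂μ := fun k => by
    simp_rw [← hH]
    exact (integral_mul_left_eq_self (fun U => ‖(H * U) a a‖ ^ 4) (phase b k)).trans
      (integral_mul_left_eq_self (fun U => ‖U a a‖ ^ 4) H)
  have key : ∫ U, ‖U a a‖ ^ 4 ∂μ = ∫ U, ((7 / 25) ^ 4 * (‖U a a‖ ^ 2 * ‖U a a‖ ^ 2) +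
      (24 / 25) ^ 4 * (‖U b a‖ ^ 2 * ‖U b a‖ ^ 2) +
      4 * (7 / 25) ^ 2 * (24 / 25) ^ 2 * (‖U a a‖ ^ 2 * ‖U b a‖ ^ 2)) ∂μ := by
    calc ∫ U, ‖U a a‖ ^ 4 ∂μ
        = (1 / 4) * ∑ k ∈ Finset.range 4,
            ∫ U, ‖7 / 25 * U a a + Complex.I ^ k * (-24 / 25 * U b a)‖ ^ 4 ∂μ := by
          simp [hinv]
      _ = (1 / 4) * ∫ U, ∑ k ∈ Finset.range 4,
            ‖7 / 25 * U a a + Complex.I ^ k * (-24 / 25 * U b a)‖ ^ 4 ∂μ := by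
          rw [integral_finsetSum _ fun k _ => Continuous.integrable_of_compactSpace (by fun_prop)]
      _ = _ := by
          rw [← integral_const_mul]
          congr with U
          simp only [Complex.sum_norm_add_I_pow_mul_pow_four, norm_mul]
          norm_num
          ring
  have hpow : ∫ U, ‖U a a‖ ^ 4 ∂μ = entryMoment μ a a a a := by
    simp only [entryMoment, ← pow_add]
  have hswap : entryMoment μ b a b a = entryMoment μ a a a a := by
    simpa using entryMoment_perm μ (Equiv.swap a b) 1 a a a a
  rw [integral_add, integral_add, integral_const_mul, integral_const_mul, integral_const_mul] at key
  · simp only [entryMoment] at hpow hswap ⊢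
    linarith
  all_goals exact Continuous.integrable_of_compactSpace (by fun_prop)

lemma entryMoment_add_card_sub_one_mul [IsFiniteMeasure μ] {a b : n} (hab : a ≠ b) :
    entryMoment μ a a b a + (Fintype.card n - 1) * entryMoment μ a a b b =
      ∫ U, ‖U a a‖ ^ 2 ∂μ := by
  have hcol : ∀ l ≠ a, entryMoment μ a a b l = entryMoment μ a a b b := fun l hla => by
    simpa [Equiv.swap_apply_of_ne_of_ne hla.symm hab] using
      entryMoment_perm μ 1 (Equiv.swap l b) a a b b
  calc _ = ∑ l, entryMoment μ a a b l := (Fintype.sum_eq_add_card_sub_one_mul a hcol).symm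
    _ = ∫ U, ∑ l, ‖U a a‖ ^ 2 * ‖U b l‖ ^ 2 ∂μ :=
      (integral_finsetSum _ fun l _ => Continuous.integrable_of_compactSpace (by fun_prop)).symm
    _ = _ := by simp_rw [← Finset.mul_sum, sum_norm_sq_apply, mul_one]

lemma card_mul_integral_norm_sq [IsProbabilityMeasure μ] (a : n) :
    Fintype.card n * ∫ U, ‖U a a‖ ^ 2 ∂μ = 1 := by
  have hrow : ∀ j, ∫ U, ‖U a j‖ ^ 2 ∂μ = ∫ U, ‖U a a‖ ^ 2 ∂μ := fun j => by
    simpa using integral_submatrix μ (fun M => ‖M a a‖ ^ 2) 1 (Equiv.swap a j)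
  calc _ = ∑ j, ∫ U, ‖U a j‖ ^ 2 ∂μ := by simp [hrow]
    _ = ∫ U, ∑ j, ‖U a j‖ ^ 2 ∂μ :=
      (integral_finsetSum _ fun j _ => Continuous.integrable_of_compactSpace (by fun_prop)).symm
    _ = 1 := by simp [sum_norm_sq_apply]

theorem integral_norm_trace_pow_four_eq_two [Nontrivial n] [IsProbabilityMeasure μ] :
    ∫ U, ‖trace (U : Matrix n n ℂ)‖ ^ 4 ∂μ = 2 := by
  obtain ⟨a, b, hab⟩ := exists_pair_ne n
  have hrow : ∀ i, ∑ j, (if i = j then 1 else 2) * entryMoment μ i i j j =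
      entryMoment μ a a a a + (Fintype.card n - 1) * (2 * entryMoment μ a a b b) := fun i => by
    rw [Fintype.sum_eq_add_card_sub_one_mul i fun j hji => by
        rw [if_neg hji.symm, entryMoment_diag_of_ne μ hab hji.symm],
      if_pos rfl, one_mul, entryMoment_diag μ a]
  rw [integral_norm_trace_pow_four, Fintype.sum_prod_type]
  simp only [hrow, Finset.sum_const, Finset.card_univ, nsmul_eq_mul, entryMoment_eq_two_mul μ hab]
  linear_combination 2 * (Fintype.card n : ℝ) * entryMoment_add_card_sub_one_mul μ hab +
    2 * card_mul_integral_norm_sq μ a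

end Invariant

end Haar

end Matrix.UnitaryGroup

/-- **The second frame potential of the Haar measure equals 2.**
Let `d ≥ 2` and let `μ` be the Haar probability measure on the unitary group `U(d)`
(a left- and right-invariant Borel probability measure).  Then
`∫_{U(d)} |tr U|⁴ dμ(U) = 2`. -/
theorem haar_frame_potential_eq_two (d : ℕ) (hd : 2 ≤ d)
    (μ : Measure (Matrix.unitaryGroup (Fin d) ℂ)) [IsProbabilityMeasure μ]
    [μ.IsMulLeftInvariant] [μ.IsMulRightInvariant] :
    ∫ U, ‖Matrix.trace (U : Matrix (Fin d) (Fin d) ℂ)‖ ^ 4 ∂μ = 2 := by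
  have : Nontrivial (Fin d) := Fin.nontrivial_iff_two_le.mpr hd
  exact UnitaryGroup.integral_norm_trace_pow_four_eq_two μ
end

section
/- Let d ≥ 1 and let E = {(p_i, U_i)}_{i=1}^m be a finite ensemble of unitaries: p_i ≥ 0 real numbers with Σ_i p_i = 1 and U_i ∈ U(d). Define the second-moment operators M_E = Σ_i p_i · (U_i ⊗ U_i ⊗ conj(U_i) ⊗ conj(U_i)) and M_H = ∫_{U(d)} U ⊗ U ⊗ conj(U) ⊗ conj(U) dμ(U), both d⁴×d⁴ complex matrices formed with Kronecker products and entrywise complex conjugation. Then the squared Frobenius distance equals the frame-potential difference: tr((M_E − M_H)·(M_E − M_H)ᴴ) = Σ_{i,j} p_i p_j |tr(U_iᴴ U_j)|⁴ − ∫_{U(d)} ∫_{U(d)} |tr(Uᴴ V)|⁴ dμ(U) dμ(V). -/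
open MeasureTheory Matrix
open scoped Matrix Kronecker

attribute [local instance] Matrix.normedAddCommGroup Matrix.normedSpace

/-- The second-moment operator `U ⊗ U ⊗ conj(U) ⊗ conj(U)` of a `d × d` matrix `U`,
a `d⁴ × d⁴` complex matrix formed with Kronecker products and entrywise conjugation. -/
def secondMomentOp (d : ℕ) (U : Matrix (Fin d) (Fin d) ℂ) :
    Matrix (((Fin d × Fin d) × Fin d) × Fin d) (((Fin d × Fin d) × Fin d) × Fin d) ℂ :=
  ((U ⊗ₖ U) ⊗ₖ U.map (starRingEnd ℂ)) ⊗ₖ U.map (starRingEnd ℂ)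

/-! The pairing `tr(M(U) M(V)ᴴ)` of two second-moment operators factors over the Kronecker
product into `tr(U Vᴴ)² · conj(tr(U Vᴴ))² = |tr(Uᴴ V)|⁴`. By left invariance of `μ`, the average
`∫ |tr(Uᴴ V)|⁴ dμ(V) = ∫ |tr V|⁴ dμ =: F_Haar` does not depend on `U`. Hence, after expanding the
square, each of the three terms involving `M_H` equals `F_Haar` (using `Σ pᵢ = 1` and that `μ` is a
probability measure), as does the Haar double integral, and only the ensemble term `F_E`
survives. -/

namespace Matrix

variable {X R 𝕜 : Type*} {l m n o p : Type*}

theorem _root_.Continuous.matrix_kronecker [TopologicalSpace X] [TopologicalSpace R] [Mul R]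
    [ContinuousMul R] {A : X → Matrix l m R} {B : X → Matrix n o R} (hA : Continuous A)
    (hB : Continuous B) : Continuous fun x => A x ⊗ₖ B x :=
  continuous_matrix fun _ _ => (hA.matrix_elem _ _).mul (hB.matrix_elem _ _)

theorem star_trace_mul_conjTranspose [Fintype m] [Fintype n] [NonUnitalNonAssocSemiring R]
    [StarRing R] (A B : Matrix m n R) : star (trace (A * Bᴴ)) = trace (B * Aᴴ) := by
  rw [← trace_conjTranspose, conjTranspose_mul, conjTranspose_conjTranspose]

theorem trace_kronecker_mul_conjTranspose [Fintype m] [Fintype n] [Fintype o] [Fintype p]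
    [CommSemiring R] [StarRing R] (A C : Matrix m n R) (B D : Matrix o p R) :
    trace ((A ⊗ₖ B) * (C ⊗ₖ D)ᴴ) = trace (A * Cᴴ) * trace (B * Dᴴ) := by
  rw [conjTranspose_kronecker, ← mul_kronecker_mul, trace_kronecker]

theorem trace_map_conj_mul_conjTranspose [Fintype m] [Fintype n] [CommSemiring R] [StarRing R]
    (A B : Matrix m n R) :
    trace (A.map (starRingEnd R) * (B.map (starRingEnd R))ᴴ) = star (trace (A * Bᴴ)) := by
  simp [trace, mul_apply, star_sum, mul_comm, starRingEnd_apply]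

theorem trace_sum_smul_mul_conjTranspose [Fintype m] [Fintype n] [CommSemiring R] [StarRing R]
    {ι : Type*} (s : Finset ι) (w : ι → R) (A : ι → Matrix m n R) (B : Matrix m n R) :
    trace ((∑ i ∈ s, w i • A i) * Bᴴ) = ∑ i ∈ s, w i * trace (A i * Bᴴ) := by
  simp only [Matrix.sum_mul, trace_sum, Matrix.smul_mul, trace_smul, smul_eq_mul]

theorem trace_mul_conjTranspose_sum_smul [Fintype m] [Fintype n] [CommSemiring R] [StarRing R]
    {ι : Type*} (s : Finset ι) (w : ι → R) (A : Matrix m n R) (B : ι → Matrix m n R) :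
    trace (A * (∑ i ∈ s, w i • B i)ᴴ) = ∑ i ∈ s, star (w i) * trace (A * (B i)ᴴ) := by
  simp only [conjTranspose_sum, conjTranspose_smul, Matrix.mul_sum, Matrix.mul_smul, trace_sum,
    trace_smul, smul_eq_mul]

section Integral

/- Integrability is assumed entrywise: under the entrywise norm, `Integrable f μ` for a
matrix-valued `f` does not elaborate, because the norm topology is not reducibly the
`Matrix` topology. -/
variable [RCLike 𝕜] [Fintype m] [Fintype n] {α : Type*} [MeasurableSpace α] {μ : Measure α}
  {f : α → Matrix m n 𝕜}

theorem trace_integral_mul_conjTranspose (hf : ∀ i j, Integrable (fun a => f a i j) μ)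
    (B : Matrix m n 𝕜) :
    trace ((∫ a, f a ∂μ) * Bᴴ) = ∫ a, trace (f a * Bᴴ) ∂μ := by
  let L : Matrix m n 𝕜 →ₗ[𝕜] 𝕜 :=
    { toFun := fun A => trace (A * Bᴴ)
      map_add' := fun A C => by rw [Matrix.add_mul, trace_add]
      map_smul' := fun c A => by rw [Matrix.smul_mul, trace_smul]; rfl }
  exact (L.toContinuousLinearMap.integral_comp_comm
    (Integrable.of_eval fun i => Integrable.of_eval (hf i))).symm

theorem trace_mul_conjTranspose_integral (hf : ∀ i j, Integrable (fun a => f a i j) μ)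
    (A : Matrix m n 𝕜) :
    trace (A * (∫ a, f a ∂μ)ᴴ) = ∫ a, trace (A * (f a)ᴴ) ∂μ := by
  rw [← star_trace_mul_conjTranspose, trace_integral_mul_conjTranspose hf]
  simp_rw [← star_trace_mul_conjTranspose (f _)]
  exact (integral_conj (𝕜 := 𝕜)).symm

end Integral

end Matrix

open Matrix

variable {d : ℕ}

theorem integral_conjTranspose_mul_eq_self {E : Type*} [NormedAddCommGroup E] [NormedSpace ℝ E]
    (μ : Measure (unitaryGroup (Fin d) ℂ)) [μ.IsMulLeftInvariant]
    (f : Matrix (Fin d) (Fin d) ℂ → E) (U : unitaryGroup (Fin d) ℂ) :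
    ∫ V : unitaryGroup (Fin d) ℂ, f ((U : Matrix (Fin d) (Fin d) ℂ)ᴴ * V) ∂μ =
      ∫ V : unitaryGroup (Fin d) ℂ, f V ∂μ :=
  integral_mul_left_eq_self (fun V : unitaryGroup (Fin d) ℂ => f V) U⁻¹

theorem trace_secondMomentOp_mul_conjTranspose (U V : Matrix (Fin d) (Fin d) ℂ) :
    trace (secondMomentOp d U * (secondMomentOp d V)ᴴ) = (‖trace (Uᴴ * V)‖ ^ 4 : ℝ) := by
  have hnorm : ‖trace (Uᴴ * V)‖ = ‖trace (U * Vᴴ)‖ := by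
    rw [trace_mul_comm, ← star_trace_mul_conjTranspose, norm_star]
  simp only [secondMomentOp, trace_kronecker_mul_conjTranspose, trace_map_conj_mul_conjTranspose,
    hnorm, Complex.star_def]
  set t := trace (U * Vᴴ)
  rw [show t * t * (starRingEnd ℂ) t * (starRingEnd ℂ) t = (t * (starRingEnd ℂ) t) ^ 2 by ring,
    Complex.mul_conj, Complex.normSq_eq_norm_sq]
  push_cast
  ring

theorem continuous_secondMomentOp : Continuous (secondMomentOp d) := by
  have hid := continuous_id (X := Matrix (Fin d) (Fin d) ℂ)
  have hconj := hid.matrix_map Complex.continuous_conj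
  exact ((hid.matrix_kronecker hid).matrix_kronecker hconj).matrix_kronecker hconj

theorem norm_secondMomentOp_apply_le_one {U : Matrix (Fin d) (Fin d) ℂ}
    (hU : U ∈ unitaryGroup (Fin d) ℂ) (a b : ((Fin d × Fin d) × Fin d) × Fin d) :
    ‖secondMomentOp d U a b‖ ≤ 1 := by
  have h := entry_norm_bound_of_unitary hU
  simp only [secondMomentOp, kroneckerMap_apply, map_apply, norm_mul, Complex.norm_conj]
  exact mul_le_one₀ (mul_le_one₀ (mul_le_one₀ (h _ _) (norm_nonneg _) (h _ _)) (by positivity)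
    (h _ _)) (by positivity) (h _ _)

theorem integrable_secondMomentOp_apply (μ : Measure (unitaryGroup (Fin d) ℂ)) [IsFiniteMeasure μ]
    (a b : ((Fin d × Fin d) × Fin d) × Fin d) :
    Integrable (fun U : unitaryGroup (Fin d) ℂ => secondMomentOp d U a b) μ :=
  .of_bound
    ((continuous_secondMomentOp.matrix_elem a b).comp continuous_subtype_val).aestronglyMeasurable
    1 (ae_of_all _ fun U => norm_secondMomentOp_apply_le_one U.2 a b)

theorem trace_secondMomentOp_mul_conjTranspose_integral (μ : Measure (unitaryGroup (Fin d) ℂ))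
    [IsFiniteMeasure μ] [μ.IsMulLeftInvariant] (U : unitaryGroup (Fin d) ℂ) :
    trace (secondMomentOp d U * (∫ V, secondMomentOp d (V : Matrix (Fin d) (Fin d) ℂ) ∂μ)ᴴ) =
      (∫ V : unitaryGroup (Fin d) ℂ, ‖trace (V : Matrix (Fin d) (Fin d) ℂ)‖ ^ 4 ∂μ : ℝ) := by
  rw [trace_mul_conjTranspose_integral (integrable_secondMomentOp_apply μ)]
  simp_rw [trace_secondMomentOp_mul_conjTranspose]
  rw [integral_complex_ofReal, integral_conjTranspose_mul_eq_self μ fun W => ‖trace W‖ ^ 4]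

theorem frobenius_distance_eq_frame_potential_difference_general (d : ℕ)
    (μ : Measure (Matrix.unitaryGroup (Fin d) ℂ)) [IsProbabilityMeasure μ]
    [μ.IsMulLeftInvariant]
    (m : ℕ) (p : Fin m → ℝ) (hsum : ∑ i, p i = 1)
    (Us : Fin m → Matrix.unitaryGroup (Fin d) ℂ) :
    (Matrix.trace
        ((∑ i, (p i : ℂ) • secondMomentOp d (Us i) -
            ∫ U, secondMomentOp d (U : Matrix (Fin d) (Fin d) ℂ) ∂μ) *
          (∑ i, (p i : ℂ) • secondMomentOp d (Us i) -
            ∫ U, secondMomentOp d (U : Matrix (Fin d) (Fin d) ℂ) ∂μ)ᴴ)) =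
      ((∑ i, ∑ j, p i * p j *
          ‖Matrix.trace ((Us i : Matrix (Fin d) (Fin d) ℂ)ᴴ *
            (Us j : Matrix (Fin d) (Fin d) ℂ))‖ ^ 4 -
        ∫ U, ∫ V, ‖Matrix.trace ((U : Matrix (Fin d) (Fin d) ℂ)ᴴ *
          (V : Matrix (Fin d) (Fin d) ℂ))‖ ^ 4 ∂μ ∂μ : ℝ) : ℂ) := by
  set M_E := ∑ i, (p i : ℂ) • secondMomentOp d (Us i)
  set M_H := ∫ U, secondMomentOp d (U : Matrix (Fin d) (Fin d) ℂ) ∂μ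
  set F_Haar := ∫ V : unitaryGroup (Fin d) ℂ, ‖trace (V : Matrix (Fin d) (Fin d) ℂ)‖ ^ 4 ∂μ
  have hEE : trace (M_E * M_Eᴴ) = ∑ i, ∑ j, ((p i * p j *
      ‖trace ((Us i : Matrix (Fin d) (Fin d) ℂ)ᴴ * (Us j : Matrix (Fin d) (Fin d) ℂ))‖ ^ 4 : ℝ) :
        ℂ) := by
    rw [trace_sum_smul_mul_conjTranspose]
    simp only [M_E, trace_mul_conjTranspose_sum_smul, trace_secondMomentOp_mul_conjTranspose,
      Complex.star_def, Complex.conj_ofReal, Finset.mul_sum]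
    push_cast
    simp only [mul_assoc]
  have hEH : trace (M_E * M_Hᴴ) = F_Haar := by
    simp only [M_E, M_H, F_Haar, trace_sum_smul_mul_conjTranspose,
      trace_secondMomentOp_mul_conjTranspose_integral, ← Finset.sum_mul, ← Complex.ofReal_sum,
      hsum, Complex.ofReal_one, one_mul]
  have hHE : trace (M_H * M_Eᴴ) = F_Haar := by
    rw [← star_trace_mul_conjTranspose, hEH, Complex.star_def, Complex.conj_ofReal]
  have hHH : trace (M_H * M_Hᴴ) = F_Haar := by
    rw [trace_integral_mul_conjTranspose (integrable_secondMomentOp_apply μ)]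
    simp [M_H, F_Haar, trace_secondMomentOp_mul_conjTranspose_integral]
  have hHaar : ∫ U, ∫ V, ‖trace ((U : Matrix (Fin d) (Fin d) ℂ)ᴴ *
      (V : Matrix (Fin d) (Fin d) ℂ))‖ ^ 4 ∂μ ∂μ = F_Haar := by
    simp [F_Haar, integral_conjTranspose_mul_eq_self μ fun W => ‖trace W‖ ^ 4]
  simp only [conjTranspose_sub, Matrix.sub_mul, Matrix.mul_sub, trace_sub, hEE, hEH, hHE, hHH,
    hHaar]
  push_cast
  ring

/-- **Frobenius distance to the Haar second moment equals the frame-potential difference.**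
Let `d ≥ 1`, let `μ` be the Haar probability measure on `U(d)` (a left- and right-invariant
Borel probability measure), and let `E = {(pᵢ, Uᵢ)}` be a finite ensemble of unitaries
(`pᵢ ≥ 0`, `Σᵢ pᵢ = 1`, `Uᵢ ∈ U(d)`).  With
`M_E = Σᵢ pᵢ • (Uᵢ ⊗ Uᵢ ⊗ conj(Uᵢ) ⊗ conj(Uᵢ))` and
`M_H = ∫ U ⊗ U ⊗ conj(U) ⊗ conj(U) dμ(U)`, the squared Frobenius distance
`tr((M_E - M_H)(M_E - M_H)ᴴ)` equals the frame-potential difference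
`Σᵢⱼ pᵢ pⱼ |tr(Uᵢᴴ Uⱼ)|⁴ - ∫∫ |tr(Uᴴ V)|⁴ dμ(U) dμ(V)`. -/
theorem frobenius_distance_eq_frame_potential_difference (d : ℕ) (hd : 1 ≤ d)
    (μ : Measure (Matrix.unitaryGroup (Fin d) ℂ)) [IsProbabilityMeasure μ]
    [μ.IsMulLeftInvariant] [μ.IsMulRightInvariant]
    (m : ℕ) (p : Fin m → ℝ) (hp : ∀ i, 0 ≤ p i) (hsum : ∑ i, p i = 1)
    (Us : Fin m → Matrix.unitaryGroup (Fin d) ℂ) :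
    (Matrix.trace
        ((∑ i, (p i : ℂ) • secondMomentOp d (Us i) -
            ∫ U, secondMomentOp d (U : Matrix (Fin d) (Fin d) ℂ) ∂μ) *
          (∑ i, (p i : ℂ) • secondMomentOp d (Us i) -
            ∫ U, secondMomentOp d (U : Matrix (Fin d) (Fin d) ℂ) ∂μ)ᴴ)) =
      ((∑ i, ∑ j, p i * p j *
          ‖Matrix.trace ((Us i : Matrix (Fin d) (Fin d) ℂ)ᴴ *
            (Us j : Matrix (Fin d) (Fin d) ℂ))‖ ^ 4 -
        ∫ U, ∫ V, ‖Matrix.trace ((U : Matrix (Fin d) (Fin d) ℂ)ᴴ *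
          (V : Matrix (Fin d) (Fin d) ℂ))‖ ^ 4 ∂μ ∂μ : ℝ) : ℂ) :=
  frobenius_distance_eq_frame_potential_difference_general d μ m p hsum Us
end
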